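/- arXiv:2406.01057 — 4 statements merged into one kernel-verified Lean document; each statement's English description precedes it below -/
import Mathlib

section
/- Pendant-support lemma for minimal vertex covers (core of the NP-completeness of Minimal Vertex Cover Knapsack on trees): Let G = (V, E) be a finite simple graph and let S ⊆ V be an independent set such that every vertex u ∈ S has a neighbor of degree 1 (a pendant vertex whose unique neighbor is u). Then for every subset I ⊆ S there exists a minimal vertex cover W of G with W ∩ S = I. -/
/-- A vertex cover of a simple graph: every edge has at least one endpoint in `U`. -/
def IsVertexCover {V : Type*} (G : SimpleGraph V) (U : Finset V) : Prop :=
  ∀ ⦃u v : V⦄, G.Adj u v → u ∈ U ∨ v ∈ U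

/-- A minimal vertex cover: a vertex cover none of whose proper subsets is a
vertex cover. -/
def IsMinimalVertexCover {V : Type*} (G : SimpleGraph V) (U : Finset V) : Prop :=
  IsVertexCover G U ∧ ∀ W : Finset V, W ⊂ U → ¬ IsVertexCover G W

/-- Every vertex cover contains a minimal vertex cover. -/
lemma exists_minimal_subcover {V : Type*} [Fintype V] [DecidableEq V]
    (G : SimpleGraph V) :
    ∀ n : ℕ, ∀ C : Finset V, C.card ≤ n → IsVertexCover G C →
      ∃ W ⊆ C, IsMinimalVertexCover G W := by
  intro n
  induction n with
  | zero =>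
    intro C hC hcov
    refine ⟨C, Finset.Subset.refl C, hcov, ?_⟩
    intro W hW _
    exact absurd (Finset.card_lt_card hW) (by omega)
  | succ n ih =>
    intro C hC hcov
    by_cases h : ∃ W, W ⊂ C ∧ IsVertexCover G W
    · obtain ⟨W, hWC, hWcov⟩ := h
      have : W.card ≤ n := by
        have := Finset.card_lt_card hWC
        omega
      obtain ⟨W', hW'W, hW'⟩ := ih W this hWcov
      exact ⟨W', hW'W.trans hWC.subset, hW'⟩
    · exact ⟨C, Finset.Subset.refl C, hcov, fun W hW hWcov => h ⟨W, hW, hWcov⟩⟩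

/-- Pendant-support lemma: if `S` is an independent set each of whose vertices has a
neighbor of degree `1`, then for every `I ⊆ S` there is a minimal vertex cover `W`
with `W ∩ S = I`. -/
theorem exists_minimalVertexCover_inter_eq {V : Type*} [Fintype V] [DecidableEq V]
    (G : SimpleGraph V) [DecidableRel G.Adj] (S : Finset V)
    (hIndep : ∀ u ∈ S, ∀ v ∈ S, ¬ G.Adj u v)
    (hPendant : ∀ u ∈ S, ∃ p : V, G.Adj u p ∧ G.degree p = 1) :
    ∀ I : Finset V, I ⊆ S →
      ∃ W : Finset V, IsMinimalVertexCover G W ∧ W ∩ S = I := by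
  intro I hIS
  classical
  -- excluded vertices: S \ I together with degree-1 neighbors of vertices of I
  set Bad : Set V := {x | (x ∈ S ∧ x ∉ I) ∨ (G.degree x = 1 ∧ ∃ u ∈ I, G.Adj u x)}
    with hBad
  set C : Finset V := Finset.univ.filter (fun x => ¬ x ∈ Bad) with hC
  have memC : ∀ x, x ∈ C ↔ ¬ x ∈ Bad := by
    intro x; simp [hC]
  -- a degree-1 vertex adjacent to u has u as its unique neighbor
  have huniq : ∀ {p u v : V}, G.degree p = 1 → G.Adj u p → G.Adj v p → u = v := by
    intro p u v hdeg hu hv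
    have h1 : u ∈ G.neighborFinset p := by
      rw [SimpleGraph.mem_neighborFinset]; exact hu.symm
    have h2 : v ∈ G.neighborFinset p := by
      rw [SimpleGraph.mem_neighborFinset]; exact hv.symm
    obtain ⟨a, ha⟩ := Finset.card_eq_one.mp hdeg
    rw [ha, Finset.mem_singleton] at h1 h2
    rw [h1, h2]
  -- C is a vertex cover
  have hCcov : IsVertexCover G C := by
    intro x y hxy
    by_contra h
    push_neg at h
    obtain ⟨hx, hy⟩ := h
    rw [memC, not_not] at hx hy
    rcases hx with ⟨hxS, hxI⟩ | ⟨hxdeg, u, huI, hux⟩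
    · rcases hy with ⟨hyS, hyI⟩ | ⟨hydeg, u, huI, huy⟩
      · exact hIndep x hxS y hyS hxy
      · -- y is a pendant of u ∈ I, but also adjacent to x ∉ I : u = x, contradiction
        have := huniq hydeg huy hxy
        exact hxI (this ▸ huI)
    · rcases hy with ⟨hyS, hyI⟩ | ⟨hydeg, w, hwI, hwy⟩
      · have := huniq hxdeg hux hxy.symm
        exact hyI (this ▸ huI)
      · -- x pendant of u, y pendant of w, x adjacent to y ⇒ y = u ∈ S, w ∈ S adjacent
        have hyu : u = y := huniq hxdeg hux hxy.symm
        exact hIndep w (hIS hwI) u (hIS huI) (hyu ▸ hwy)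
  -- C ∩ S = I
  have hI_sub_C : I ⊆ C := by
    intro x hxI
    rw [memC]
    rintro (⟨_, hxI'⟩ | ⟨hxdeg, u, huI, hux⟩)
    · exact hxI' hxI
    · exact hIndep u (hIS huI) x (hIS hxI) hux
  -- pendants of elements of I are not in C
  obtain ⟨W, hWC, hWmin⟩ :=
    exists_minimal_subcover G C.card C le_rfl hCcov
  refine ⟨W, hWmin, ?_⟩
  apply Finset.Subset.antisymm
  · intro x hx
    rw [Finset.mem_inter] at hx
    obtain ⟨hxW, hxS⟩ := hx
    by_contra hxI
    have := (memC x).mp (hWC hxW)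
    exact this (Or.inl ⟨hxS, hxI⟩)
  · intro u huI
    rw [Finset.mem_inter]
    refine ⟨?_, hIS huI⟩
    obtain ⟨p, hup, hpdeg⟩ := hPendant u (hIS huI)
    have hpC : p ∉ C := by
      rw [memC, not_not]
      exact Or.inr ⟨hpdeg, u, huI, hup⟩
    rcases hWmin.1 hup with h | h
    · exact h
    · exact absurd (hWC h) hpC
end

section
/- Correctness of the reduction from Knapsack to Minimal Vertex Cover Knapsack (Theorem: Minimal Vertex Cover Knapsack is NP-complete for trees, in distilled form): Let G = (V, E) be a finite simple graph and let S ⊆ V be an independent set such that every vertex u ∈ S has a neighbor of degree 1 (a pendant vertex whose unique neighbor is u). Let w, α : V → ℝ≥0 be nonnegative weight and value functions with w(v) = α(v) = 0 for all v ∉ S, and let s, d ∈ ℝ. Then there exists a minimal vertex cover W of G with ∑_{v∈W} w(v) ≤ s and ∑_{v∈W} α(v) ≥ d if and only if there exists a subset I ⊆ S with ∑_{v∈I} w(v) ≤ s and ∑_{v∈I} α(v) ≥ d. -/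
/-!
Minimal vertex covers are the complements of maximal independent sets. Since weights and values
vanish off `S`, a cover `W` is worth exactly as much as `W ∩ S ⊆ S`. Conversely, for `I ⊆ S` the
set `(S \ I) ∪ {pendant neighbours of I}` is independent, because `S` is and the only neighbour of
such a pendant lies in `I`. The complement `W` of any maximal independent set containing it is a
minimal vertex cover with `W ∩ S = I`: `W` misses `S \ I`, and contains each `u ∈ I` because
the pendant neighbour of `u` does not lie in `W`.
-/

namespace SimpleGraph

variable {V : Type*} {G : SimpleGraph V} {S I M : Set V}

/-- In a locally finite graph, these are the vertices of degree one whose neighbour lies in `I`. -/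
def pendantNeighbors (G : SimpleGraph V) (I : Set V) : Set V :=
  {p | ∃ u ∈ I, G.Adj u p ∧ ∀ q, G.Adj p q → q = u}

theorem isIndepSet_sdiff_union_pendantNeighbors (hS : G.IsIndepSet S) (hIS : I ⊆ S) :
    G.IsIndepSet (S \ I ∪ G.pendantNeighbors I) := by
  rintro x (⟨hxS, hxI⟩ | ⟨u, hu, hux, hx⟩) y (⟨hyS, hyI⟩ | ⟨u', hu', -, hy⟩) hxy hadj
  · exact hS hxS hyS hxy hadj
  · exact hxI (hy x hadj.symm ▸ hu')
  · exact hyI (hx y hadj ▸ hu)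
  · have hyu : y = u := hx y hadj
    have hxu' : x = u' := hy x hadj.symm
    subst hyu hxu'
    exact hS (hIS hu') (hIS hu) hux.ne' hux.symm

theorem sdiff_eq_of_sdiff_union_pendantNeighbors_subset (hM : G.IsIndepSet M) (hIS : I ⊆ S)
    (hpend : ∀ u ∈ I, ∃ p, G.Adj u p ∧ ∀ q, G.Adj p q → q = u)
    (hA : S \ I ∪ G.pendantNeighbors I ⊆ M) : S \ M = I := by
  ext v
  refine ⟨fun ⟨hvS, hvM⟩ => ?_, fun hvI => ⟨hIS hvI, fun hvM => ?_⟩⟩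
  · by_contra hvI
    exact hvM (hA (Or.inl ⟨hvS, hvI⟩))
  · obtain ⟨p, hvp, hp⟩ := hpend v hvI
    exact hM hvM (hA (Or.inr ⟨v, hvI, hvp, hp⟩)) hvp.ne hvp

end SimpleGraph

section

variable {V : Type*} [Fintype V] [DecidableEq V] {G : SimpleGraph V}

theorem isMinimalVertexCover_compl_of_maximal {M : Finset V}
    (hM : Maximal (fun N : Finset V => G.IsIndepSet N) M) : IsMinimalVertexCover G Mᶜ := by
  have hcover : ∀ N : Finset V, IsVertexCover G Nᶜ ↔ G.IsIndepSet N := fun N => by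
    rw [← SimpleGraph.isVertexCover_compl, ← Finset.coe_compl]; rfl
  refine ⟨(hcover M).2 hM.prop, fun W hW hWcover => ?_⟩
  rw [← compl_compl W] at hW hWcover
  exact hM.not_gt ((hcover _).1 hWcover) (compl_lt_compl_iff_lt.mp hW)

theorem exists_isMinimalVertexCover_inter_eq [DecidableRel G.Adj] {S I : Finset V}
    (hS : G.IsIndepSet S) (hPendant : ∀ u ∈ S, ∃ p, G.Adj u p ∧ G.degree p = 1) (hIS : I ⊆ S) :
    ∃ W : Finset V, IsMinimalVertexCover G W ∧ W ∩ S = I := by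
  classical
  have hIS' : (I : Set V) ⊆ S := Finset.coe_subset.2 hIS
  have hpend : ∀ u ∈ (I : Set V), ∃ p, G.Adj u p ∧ ∀ q, G.Adj p q → q = u := fun u hu =>
    let ⟨p, hup, hp⟩ := hPendant u (hIS hu)
    ⟨p, hup, fun q hpq => (G.degree_eq_one_iff_existsUnique_adj.mp hp).unique hpq hup.symm⟩
  obtain ⟨M, hAM, hM⟩ := Finite.exists_le_maximal (p := fun N : Finset V => G.IsIndepSet N)
    (a := (↑S \ ↑I ∪ G.pendantNeighbors ↑I).toFinset)
    (by simpa using G.isIndepSet_sdiff_union_pendantNeighbors hS hIS')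
  refine ⟨Mᶜ, isMinimalVertexCover_compl_of_maximal hM, ?_⟩
  have hSM := G.sdiff_eq_of_sdiff_union_pendantNeighbors_subset hM.prop hIS' hpend
    fun _ hx => hAM (Set.mem_toFinset.2 hx)
  rw [Finset.inter_comm, ← Finset.sdiff_eq_inter_compl]
  exact_mod_cast hSM

end

/-- Correctness of the reduction from Knapsack to Minimal Vertex Cover Knapsack:
if `S` is an independent set each of whose vertices has a neighbor of degree `1`, and
weights and values vanish outside `S`, then there is a minimal vertex cover `W` with
`∑_{v∈W} w(v) ≤ s` and `∑_{v∈W} α(v) ≥ d` iff there is a subset `I ⊆ S` with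
`∑_{v∈I} w(v) ≤ s` and `∑_{v∈I} α(v) ≥ d`. -/
theorem minimalVertexCoverKnapsack_reduction {V : Type*} [Fintype V] [DecidableEq V]
    (G : SimpleGraph V) [DecidableRel G.Adj] (S : Finset V)
    (hIndep : ∀ u ∈ S, ∀ v ∈ S, ¬ G.Adj u v)
    (hPendant : ∀ u ∈ S, ∃ p : V, G.Adj u p ∧ G.degree p = 1)
    (w α : V → NNReal) (hw : ∀ v, v ∉ S → w v = 0) (hα : ∀ v, v ∉ S → α v = 0)
    (s d : ℝ) :
    (∃ W : Finset V, IsMinimalVertexCover G W ∧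
        (∑ v ∈ W, (w v : ℝ)) ≤ s ∧ d ≤ ∑ v ∈ W, (α v : ℝ)) ↔
    (∃ I : Finset V, I ⊆ S ∧
        (∑ v ∈ I, (w v : ℝ)) ≤ s ∧ d ≤ ∑ v ∈ I, (α v : ℝ)) := by
  have sum_eq_sum_inter : ∀ f : V → NNReal, (∀ v, v ∉ S → f v = 0) →
      ∀ W : Finset V, ∑ v ∈ W, (f v : ℝ) = ∑ v ∈ W ∩ S, (f v : ℝ) := fun f hf W =>
    (Finset.sum_subset Finset.inter_subset_left fun v hvW hv => by
      simp [hf v fun hvS => hv (Finset.mem_inter.2 ⟨hvW, hvS⟩)]).symm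
  constructor
  · rintro ⟨W, -, hws, hαs⟩
    exact ⟨W ∩ S, Finset.inter_subset_right, sum_eq_sum_inter w hw W ▸ hws,
      sum_eq_sum_inter α hα W ▸ hαs⟩
  · rintro ⟨I, hIS, hws, hαs⟩
    obtain ⟨W, hW, hWS⟩ :=
      exists_isMinimalVertexCover_inter_eq (fun u hu v hv _ => hIndep u hu v hv) hPendant hIS
    refine ⟨W, hW, ?_, ?_⟩
    · rwa [sum_eq_sum_inter w hw, hWS]
    · rwa [sum_eq_sum_inter α hα, hWS]
end

section
/- Dual feasibility bound in the dual-fitting analysis of greedy set cover (per-set bound in the max(2, H_g)-approximation theorem): Let S be a finite set with |S| ≤ g for some natural number g ≥ 1, let w ≥ 0 be a real number, and let A_1, …, A_l be pairwise disjoint (possibly empty) sets with A_1 ∪ ⋯ ∪ A_l = S. For 1 ≤ k ≤ l set a_k = |A_k| + |A_{k+1}| + ⋯ + |A_l|. Let y : S → ℝ satisfy 0 ≤ y(j) ≤ w/(H_g · a_k) for every j ∈ A_k and every k. Then ∑_{j∈S} y(j) ≤ w. -/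
/-- The `n`-th harmonic number `H_n = ∑_{i=1}^{n} 1/i`, as a real number. -/
noncomputable def harmonicNumber (n : ℕ) : ℝ := ∑ i ∈ Finset.Icc 1 n, (1 : ℝ) / i

/-!
Summing the bound on `y` over each block gives `∑_{j∈S} y j ≤ (w / H_g) ∑_k |A_k| / a_k`.
Since `a_k = |A_k| + a_{k+1}` and each of the `|A_k|` reciprocals `1/i` with `a_{k+1} < i ≤ a_k`
is at least `1/a_k`, we get `|A_k| / a_k ≤ H_{a_k} - H_{a_{k+1}}`; the sum telescopes to at most
`H_{a_1} = H_{|S|} ≤ H_g`.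
-/

open Finset

lemma harmonicNumber_mono : Monotone harmonicNumber := fun _ _ h =>
  sum_le_sum_of_subset_of_nonneg (Icc_subset_Icc le_rfl h) fun _ _ _ => by positivity

lemma harmonicNumber_nonneg (n : ℕ) : 0 ≤ harmonicNumber n :=
  sum_nonneg fun _ _ => by positivity

lemma harmonicNumber_add_sub (a c : ℕ) :
    harmonicNumber (a + c) - harmonicNumber a = ∑ i ∈ Ioc a (a + c), (1 : ℝ) / i := by
  simp only [harmonicNumber, show ∀ n, Icc 1 n = Ioc 0 n from Icc_add_one_left_eq_Ioc 0]
  rw [← sum_Ioc_consecutive _ a.zero_le (a.le_add_right c), add_sub_cancel_left]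

lemma div_add_le_harmonicNumber_sub (a c : ℕ) :
    (c : ℝ) / (a + c) ≤ harmonicNumber (a + c) - harmonicNumber a := by
  rw [harmonicNumber_add_sub]
  calc (c : ℝ) / (a + c) = #(Ioc a (a + c)) • (1 / ((a + c : ℕ) : ℝ)) := by
        rw [Nat.card_Ioc, add_tsub_cancel_left, nsmul_eq_mul]
        push_cast
        ring
    _ ≤ ∑ i ∈ Ioc a (a + c), (1 : ℝ) / i := by
        refine card_nsmul_le_sum _ _ _ fun i hi => ?_
        rw [mem_Ioc] at hi
        exact one_div_le_one_div_of_le (by exact_mod_cast a.zero_le.trans_lt hi.1)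
          (by exact_mod_cast hi.2)

theorem sum_div_tail_sum_le_harmonicNumber (c : ℕ → ℕ) (l m : ℕ) :
    ∑ k ∈ Icc m l, (c k : ℝ) / ∑ r ∈ Icc k l, (c r : ℝ) ≤
      harmonicNumber (∑ r ∈ Icc m l, c r) := by
  by_cases hml : m ≤ l
  · have ih := sum_div_tail_sum_le_harmonicNumber c l (m + 1)
    have head := div_add_le_harmonicNumber_sub (∑ r ∈ Icc (m + 1) l, c r) (c m)
    simp only [Icc_add_one_left_eq_Ioc] at ih head
    rw [← add_sum_Ioc_eq_sum_Icc hml, ← add_sum_Ioc_eq_sum_Icc hml,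
      ← add_sum_Ioc_eq_sum_Icc hml, add_comm (c m), add_comm (c m : ℝ)]
    push_cast at head ⊢
    linarith
  · simp [Icc_eq_empty hml, harmonicNumber]
termination_by l + 1 - m

theorem dual_fitting_per_set_bound_general {V : Type*} [DecidableEq V]
    (S : Finset V) (g : ℕ) (hSg : S.card ≤ g)
    (w : ℝ) (hw : 0 ≤ w) (l : ℕ) (A : ℕ → Finset V)
    (hdisj : ∀ k ∈ Finset.Icc 1 l, ∀ k' ∈ Finset.Icc 1 l, k ≠ k' →
      Disjoint (A k) (A k'))
    (hunion : (Finset.Icc 1 l).biUnion A = S)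
    (y : V → ℝ)
    (hy : ∀ k ∈ Finset.Icc 1 l, ∀ j ∈ A k,
      0 ≤ y j ∧ y j ≤ w / (harmonicNumber g * ∑ r ∈ Finset.Icc k l, (A r).card)) :
    ∑ j ∈ S, y j ≤ w := by
  have hcard : ∑ k ∈ Icc 1 l, #(A k) = #S := by rw [← hunion, card_biUnion hdisj]
  calc ∑ j ∈ S, y j = ∑ k ∈ Icc 1 l, ∑ j ∈ A k, y j := by rw [← hunion, sum_biUnion hdisj]
    _ ≤ ∑ k ∈ Icc 1 l, #(A k) • (w / (harmonicNumber g * ((∑ r ∈ Icc k l, #(A r) : ℕ) : ℝ))) :=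
        sum_le_sum fun k hk => sum_le_card_nsmul _ _ _ fun j hj => (hy k hk j hj).2
    _ = w / harmonicNumber g * ∑ k ∈ Icc 1 l, (#(A k) : ℝ) / ∑ r ∈ Icc k l, (#(A r) : ℝ) := by
        rw [mul_sum]
        refine sum_congr rfl fun k _ => ?_
        rw [nsmul_eq_mul]
        push_cast
        ring
    _ ≤ w / harmonicNumber g * harmonicNumber g := by
        refine mul_le_mul_of_nonneg_left ?_ (div_nonneg hw (harmonicNumber_nonneg g))
        exact (sum_div_tail_sum_le_harmonicNumber _ l 1).trans
          (harmonicNumber_mono (hcard ▸ hSg))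
    _ ≤ w := by
        rcases (harmonicNumber_nonneg g).eq_or_lt with hzero | hpos
        · simp [← hzero, hw]
        · rw [div_mul_cancel₀ w hpos.ne']

/-- Dual feasibility bound in the dual-fitting analysis of greedy set cover: if
`S = A_1 ∪ ⋯ ∪ A_l` (pairwise disjoint), `|S| ≤ g`, `a_k = |A_k| + ⋯ + |A_l|`,
and `0 ≤ y(j) ≤ w/(H_g · a_k)` for every `j ∈ A_k`, then `∑_{j∈S} y(j) ≤ w`. -/
theorem dual_fitting_per_set_bound {V : Type*} [DecidableEq V]
    (S : Finset V) (g : ℕ) (hg : 1 ≤ g) (hSg : S.card ≤ g)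
    (w : ℝ) (hw : 0 ≤ w) (l : ℕ) (A : ℕ → Finset V)
    (hdisj : ∀ k ∈ Finset.Icc 1 l, ∀ k' ∈ Finset.Icc 1 l, k ≠ k' →
      Disjoint (A k) (A k'))
    (hunion : (Finset.Icc 1 l).biUnion A = S)
    (y : V → ℝ)
    (hy : ∀ k ∈ Finset.Icc 1 l, ∀ j ∈ A k,
      0 ≤ y j ∧ y j ≤ w / (harmonicNumber g * ∑ r ∈ Finset.Icc k l, (A r).card)) :
    ∑ j ∈ S, y j ≤ w :=
  dual_fitting_per_set_bound_general S g hSg w hw l A hdisj hunion y hy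
end

section
/- Primal–dual chain bound (Equation (12) in the proof that the primal–dual algorithm is an f-approximation for Set Cover Knapsack with target value): Let F be a finite set, w, α : F → ℝ≥0, d ∈ ℝ, and let i_1, …, i_m be distinct elements of F with m ≥ 1. Put A_k = {i_1, …, i_{k−1}} for 1 ≤ k ≤ m (so A_1 = ∅) and X = {i_1, …, i_m}, and write α(A) = ∑_{i∈A} α(i). Assume α(i_k) < d − α(A_k) for all 1 ≤ k < m, and ∑_{i ∈ X∖{i_m}} α(i) < d. Suppose y_1, …, y_m are nonnegative reals such that w(i_k) = ∑_{r=1}^{k} min(α(i_k), d − α(A_r)) · y_r for every 1 ≤ k ≤ m. Then ∑_{k=1}^{m} w(i_k) ≤ 2 ∑_{r=1}^{m} (d − α(A_r)) · y_r. -/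
/-!
Weak-duality style charging: after exchanging the order of summation, the dual variable `y r`
is charged `∑_{k ≥ r} min (α (i k)) D_r`, where `D_r = d - α(A_r)` is the residual target at
round `r`. The sets `i r, …, i (m-1)` have total value below `D_r`, since together with `A_r`
they make up `X ∖ {i m}`, and the last set contributes at most `D_r`, so the charge is at most `2 D_r`.
-/

open Finset

theorem Finset.image_erase_of_injOn {α β : Type*} [DecidableEq α] [DecidableEq β] {f : α → β}
    {s : Finset α} {a : α} (hf : Set.InjOn f s) (ha : a ∈ s) :
    (s.erase a).image f = (s.image f).erase (f a) := by
  have hfa : f a ∉ (s.erase a).image f := by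
    intro hmem
    obtain ⟨b, hb, hfb⟩ := mem_image.1 hmem
    exact (ne_of_mem_erase hb) (hf (mem_of_mem_erase hb) ha hfb)
  conv_rhs => rw [← insert_erase ha, image_insert, erase_insert hfa]

theorem Finset.sum_image_Ico_add_sum_Ico {F β : Type*} [DecidableEq F] [AddCommMonoid β]
    {i : ℕ → F} {f : F → β} {a r m : ℕ} (hi : Set.InjOn i (Ico a m)) (har : a ≤ r)
    (hrm : r ≤ m) :
    ∑ j ∈ (Ico a r).image i, f j + ∑ k ∈ Ico r m, f (i k) = ∑ j ∈ (Ico a m).image i, f j := by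
  have hi' : Set.InjOn i (Ico a r) := hi.mono (coe_subset.2 (Ico_subset_Ico_right hrm))
  rw [sum_image hi', sum_image hi, sum_Ico_consecutive _ har hrm]

theorem Finset.sum_Icc_Icc_comm {M : Type*} [AddCommMonoid M] (a b : ℕ) (f : ℕ → ℕ → M) :
    ∑ k ∈ Icc a b, ∑ r ∈ Icc a k, f r k = ∑ r ∈ Icc a b, ∑ k ∈ Icc r b, f r k := by
  simpa only [Ico_add_one_right_eq_Icc] using (sum_Ico_Ico_comm a (b + 1) f).symm

theorem Finset.sum_min_le_add_of_sum_erase_le {ι M : Type*} [DecidableEq ι] [AddCommMonoid M]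
    [LinearOrder M] [IsOrderedAddMonoid M] {s : Finset ι} {a : ι → M} {D : M} {j : ι}
    (hj : j ∈ s) (h : ∑ k ∈ s.erase j, a k ≤ D) :
    ∑ k ∈ s, min (a k) D ≤ D + D := by
  rw [← add_sum_erase s _ hj]
  exact add_le_add (min_le_right _ _) ((sum_le_sum fun k _ => min_le_left _ _).trans h)

theorem Finset.sum_Icc_sum_Icc_mul_le {R : Type*} [CommSemiring R] [PartialOrder R]
    [IsOrderedRing R] {a b : ℕ} {c : ℕ → ℕ → R} {B y : ℕ → R}
    (hy : ∀ r ∈ Icc a b, 0 ≤ y r) (hB : ∀ r ∈ Icc a b, ∑ k ∈ Icc r b, c r k ≤ B r) :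
    ∑ k ∈ Icc a b, ∑ r ∈ Icc a k, c r k * y r ≤ ∑ r ∈ Icc a b, B r * y r := by
  rw [sum_Icc_Icc_comm]
  refine sum_le_sum fun r hr => ?_
  rw [← sum_mul]
  exact mul_le_mul_of_nonneg_right (hB r hr) (hy r hr)

theorem primal_dual_chain_bound_general {F : Type*} [DecidableEq F]
    (w α : F → ℝ) (d : ℝ)
    (m : ℕ) (hm : 1 ≤ m) (i : ℕ → F)
    (hinj : ∀ k ∈ Finset.Icc 1 m, ∀ k' ∈ Finset.Icc 1 m, i k = i k' → k = k')
    (hsum : ∑ j ∈ ((Finset.Icc 1 m).image i).erase (i m), α j < d)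
    (y : ℕ → ℝ) (hy : ∀ r ∈ Finset.Icc 1 m, 0 ≤ y r)
    (htight : ∀ k ∈ Finset.Icc 1 m,
      w (i k) = ∑ r ∈ Finset.Icc 1 k,
        min (α (i k)) (d - ∑ j ∈ (Finset.Ico 1 r).image i, α j) * y r) :
    ∑ k ∈ Finset.Icc 1 m, w (i k) ≤
      2 * ∑ r ∈ Finset.Icc 1 m,
        (d - ∑ j ∈ (Finset.Ico 1 r).image i, α j) * y r := by
  have hinj' : Set.InjOn i (Ico 1 m) := Set.InjOn.mono (coe_subset.2 Ico_subset_Icc_self) hinj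
  have hprefix : ∑ j ∈ (Ico 1 m).image i, α j < d := by
    rwa [← Icc_erase_right, image_erase_of_injOn hinj (right_mem_Icc.2 hm)]
  have hround : ∀ r ∈ Icc 1 m, ∑ k ∈ Icc r m, min (α (i k))
      (d - ∑ j ∈ (Ico 1 r).image i, α j) ≤ 2 * (d - ∑ j ∈ (Ico 1 r).image i, α j) := by
    intro r hr
    obtain ⟨h1r, hrm⟩ := mem_Icc.1 hr
    rw [two_mul]
    refine sum_min_le_add_of_sum_erase_le (right_mem_Icc.2 hrm) ?_
    rw [Icc_erase_right]
    linarith [sum_image_Ico_add_sum_Ico (f := α) hinj' h1r hrm]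
  calc ∑ k ∈ Icc 1 m, w (i k)
      = ∑ k ∈ Icc 1 m, ∑ r ∈ Icc 1 k,
          min (α (i k)) (d - ∑ j ∈ (Ico 1 r).image i, α j) * y r := sum_congr rfl htight
    _ ≤ ∑ r ∈ Icc 1 m, 2 * (d - ∑ j ∈ (Ico 1 r).image i, α j) * y r :=
        sum_Icc_sum_Icc_mul_le hy hround
    _ = 2 * ∑ r ∈ Icc 1 m, (d - ∑ j ∈ (Ico 1 r).image i, α j) * y r := by
        simp only [mul_sum, mul_assoc]

/-- Primal–dual chain bound for Set Cover Knapsack with target value: sets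
`i 1, …, i m` are chosen one by one, `A_k = {i 1, …, i (k-1)}` is the collection
chosen before iteration `k`, each chosen set's weight is tight for the dual
variables `y`, the residual target stays positive before the last iteration, and
the total value short of the last set is below `d`; then the total weight of the
chosen sets is at most twice the dual objective. -/
theorem primal_dual_chain_bound {F : Type*} [DecidableEq F]
    (w α : F → ℝ) (hw : ∀ j, 0 ≤ w j) (hα : ∀ j, 0 ≤ α j) (d : ℝ)
    (m : ℕ) (hm : 1 ≤ m) (i : ℕ → F)
    (hinj : ∀ k ∈ Finset.Icc 1 m, ∀ k' ∈ Finset.Icc 1 m, i k = i k' → k = k')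
    (hres : ∀ k, 1 ≤ k → k < m →
      α (i k) < d - ∑ j ∈ (Finset.Ico 1 k).image i, α j)
    (hsum : ∑ j ∈ ((Finset.Icc 1 m).image i).erase (i m), α j < d)
    (y : ℕ → ℝ) (hy : ∀ r ∈ Finset.Icc 1 m, 0 ≤ y r)
    (htight : ∀ k ∈ Finset.Icc 1 m,
      w (i k) = ∑ r ∈ Finset.Icc 1 k,
        min (α (i k)) (d - ∑ j ∈ (Finset.Ico 1 r).image i, α j) * y r) :
    ∑ k ∈ Finset.Icc 1 m, w (i k) ≤
      2 * ∑ r ∈ Finset.Icc 1 m,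
        (d - ∑ j ∈ (Finset.Ico 1 r).image i, α j) * y r :=
  primal_dual_chain_bound_general w α d m hm i hinj hsum y hy htight
end
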